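/- arXiv:1505.01424 — 2 statements merged into one kernel-verified Lean document; each statement's English description precedes it below -/
import Mathlib

section
/- Let G and H be connected non-bipartite graphs. Then |E(G)|·|E(H)| + 2 ≤ mc(G × H) ≤ 2·|E(G)|·|E(H)| + 1. -/
/-!
Colour a spanning tree of `G × H` with one colour and give every other edge a colour of its
own. This MC-colouring uses `m - n + 2` colours, where `m = 2 |E(G)| |E(H)|` (a dart of `G × H`
is a pair of darts) and `n = |V(G)| |V(H)| ≤ |E(G)| |E(H)|`, because a connected non-bipartite
graph is not a tree. `G × H` is connected since any two vertices of a connected non-bipartite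
graph are joined by walks of every large enough length: an odd closed walk fixes the parity and
a back-and-forth step adds two. The upper bound is `mc ≤ m`.
-/

open SimpleGraph

/-- An edge-coloring `c` of `G` is a *monochromatic connection coloring* (MC-coloring)
if any two vertices of `G` are joined by a monochromatic walk, i.e. a walk all of whose
edges receive the same color. -/
def SimpleGraph.IsMCColoring {V : Type*} (G : SimpleGraph V) (c : Sym2 V → ℕ) : Prop :=
  ∀ u v : V, ∃ w : G.Walk u v, ∃ k : ℕ, ∀ e ∈ w.edges, c e = k

/-- The *monochromatic connection number* `mc G`: the maximum number of colors used
on the edges of `G` by an MC-coloring of `G`. -/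
noncomputable def SimpleGraph.mc {V : Type*} (G : SimpleGraph V) : ℕ :=
  sSup {n | ∃ c : Sym2 V → ℕ, G.IsMCColoring c ∧ (c '' G.edgeSet).ncard = n}

/-- The lexicographic product `G ∘ H`: `(g,h)` and `(g',h')` are adjacent iff
`gg' ∈ E(G)`, or `g = g'` and `hh' ∈ E(H)`. -/
def SimpleGraph.lexProd {α β : Type*} (G : SimpleGraph α) (H : SimpleGraph β) :
    SimpleGraph (α × β) where
  Adj x y := G.Adj x.1 y.1 ∨ (x.1 = y.1 ∧ H.Adj x.2 y.2)
  symm := by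
    constructor
    rintro x y (h | ⟨h1, h2⟩)
    · exact Or.inl h.symm
    · exact Or.inr ⟨h1.symm, h2.symm⟩
  loopless := by
    constructor
    rintro x (h | ⟨-, h⟩)
    · exact G.loopless.irrefl _ h
    · exact H.loopless.irrefl _ h

/-- The strong product `G ⊠ H`: `(g,h)` and `(g',h')` are adjacent iff
`gg' ∈ E(G)` and `h = h'`, or `g = g'` and `hh' ∈ E(H)`, or `gg' ∈ E(G)` and `hh' ∈ E(H)`. -/
def SimpleGraph.strongProd {α β : Type*} (G : SimpleGraph α) (H : SimpleGraph β) :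
    SimpleGraph (α × β) where
  Adj x y := (G.Adj x.1 y.1 ∧ x.2 = y.2) ∨ (x.1 = y.1 ∧ H.Adj x.2 y.2) ∨
      (G.Adj x.1 y.1 ∧ H.Adj x.2 y.2)
  symm := by
    constructor
    rintro x y (⟨h1, h2⟩ | ⟨h1, h2⟩ | ⟨h1, h2⟩)
    · exact Or.inl ⟨h1.symm, h2.symm⟩
    · exact Or.inr (Or.inl ⟨h1.symm, h2.symm⟩)
    · exact Or.inr (Or.inr ⟨h1.symm, h2.symm⟩)
  loopless := by
    constructor
    rintro x (⟨h, -⟩ | ⟨-, h⟩ | ⟨h, -⟩)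
    · exact G.loopless.irrefl _ h
    · exact H.loopless.irrefl _ h
    · exact G.loopless.irrefl _ h

/-- The direct (tensor) product `G × H`: `(g,h)` and `(g',h')` are adjacent iff
`gg' ∈ E(G)` and `hh' ∈ E(H)`. -/
def SimpleGraph.tensorProd {α β : Type*} (G : SimpleGraph α) (H : SimpleGraph β) :
    SimpleGraph (α × β) where
  Adj x y := G.Adj x.1 y.1 ∧ H.Adj x.2 y.2
  symm := by
    constructor
    rintro x y ⟨h1, h2⟩
    exact ⟨h1.symm, h2.symm⟩
  loopless := by
    constructor
    rintro x ⟨h, -⟩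
    exact G.loopless.irrefl _ h

/-- The Cartesian (box) product of a finite family of graphs: two tuples are adjacent
iff they agree in all coordinates but one, where they are adjacent. -/
def SimpleGraph.piBoxProd {n : ℕ} {V : Fin n → Type*} (G : ∀ i, SimpleGraph (V i)) :
    SimpleGraph (∀ i, V i) where
  Adj x y := ∃ i, (G i).Adj (x i) (y i) ∧ ∀ j, j ≠ i → x j = y j
  symm := by
    constructor
    rintro x y ⟨i, hadj, heq⟩
    exact ⟨i, hadj.symm, fun j hj => (heq j hj).symm⟩
  loopless := by
    constructor
    rintro x ⟨i, hadj, -⟩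
    exact (G i).loopless.irrefl _ hadj

/-- The (iterated, left-associated) lexicographic product of a finite family of graphs:
two tuples are adjacent iff at the least coordinate where they differ,
they are adjacent. -/
def SimpleGraph.piLexProd {n : ℕ} {V : Fin n → Type*} (G : ∀ i, SimpleGraph (V i)) :
    SimpleGraph (∀ i, V i) where
  Adj x y := ∃ i, (G i).Adj (x i) (y i) ∧ ∀ j, j < i → x j = y j
  symm := by
    constructor
    rintro x y ⟨i, hadj, heq⟩
    exact ⟨i, hadj.symm, fun j hj => (heq j hj).symm⟩
  loopless := by
    constructor
    rintro x ⟨i, hadj, -⟩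
    exact (G i).loopless.irrefl _ hadj

namespace SimpleGraph

variable {V α β : Type*}

section Walks

variable {G : SimpleGraph V}

theorem exists_odd_loop_of_not_colorable_two (hG : G.Preconnected) (h : ¬ G.Colorable 2)
    (u : V) : ∃ w : G.Walk u u, Odd w.length := by
  obtain ⟨x, c, hc⟩ : ∃ x, ∃ c : G.Walk x x, Odd c.length := by
    simpa [two_colorable_iff_forall_loop_even] using h
  obtain ⟨p⟩ := hG u x
  refine ⟨p.append (c.append p.reverse), ?_⟩
  obtain ⟨k, hk⟩ := hc
  exact ⟨k + p.length, by simp only [Walk.length_append, Walk.length_reverse]; omega⟩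

theorem exists_adj_of_not_colorable_two (hG : G.Preconnected) (h : ¬ G.Colorable 2) (u : V) :
    ∃ v, G.Adj u v := by
  obtain ⟨w, hw⟩ := exists_odd_loop_of_not_colorable_two hG h u
  cases w with
  | nil => simp at hw
  | cons hadj _ => exact ⟨_, hadj⟩

theorem Walk.exists_length_eq_add_two_mul {u v x : V} (p : G.Walk u v) (hx : G.Adj u x)
    (k : ℕ) : ∃ q : G.Walk u v, q.length = p.length + 2 * k := by
  induction k with
  | zero => exact ⟨p, rfl⟩
  | succ k ih =>
    obtain ⟨q, hq⟩ := ih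
    exact ⟨.cons hx (.cons hx.symm q), by simp [hq]; ring⟩

theorem exists_walk_length_eq_of_not_colorable_two (hG : G.Preconnected)
    (h : ¬ G.Colorable 2) (u v : V) : ∃ N, ∀ n ≥ N, ∃ p : G.Walk u v, p.length = n := by
  obtain ⟨c, hc⟩ := exists_odd_loop_of_not_colorable_two hG h u
  obtain ⟨x, hx⟩ := exists_adj_of_not_colorable_two hG h u
  obtain ⟨p⟩ := hG u v
  refine ⟨c.length + p.length, fun n hn => ?_⟩
  obtain ⟨q, k, hq⟩ : ∃ q : G.Walk u v, ∃ k, n = q.length + 2 * k := by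
    obtain ⟨a, ha⟩ := hc
    rcases Nat.even_or_odd (n - p.length) with ⟨b, hb⟩ | ⟨b, hb⟩
    · exact ⟨p, b, by omega⟩
    · exact ⟨c.append p, b - a, by rw [Walk.length_append]; omega⟩
  obtain ⟨r, hr⟩ := q.exists_length_eq_add_two_mul hx k
  exact ⟨r, hr.trans hq.symm⟩

end Walks

theorem natCard_dart [Finite V] (G : SimpleGraph V) : Nat.card G.Dart = 2 * G.edgeSet.ncard := by
  classical
  have := Fintype.ofFinite V
  rw [Nat.card_eq_fintype_card, dart_card_eq_twice_card_edges, edgeFinset_card,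
    ← Nat.card_coe_set_eq, Nat.card_eq_fintype_card]

section TensorProd

variable {G : SimpleGraph α} {H : SimpleGraph β}

theorem reachable_tensorProd_of_length_eq {g g' : α} {h h' : β} (p : G.Walk g g')
    (q : H.Walk h h') (hpq : p.length = q.length) :
    (G.tensorProd H).Reachable (g, h) (g', h') := by
  induction p generalizing h q with
  | nil =>
    obtain rfl := Walk.eq_of_length_eq_zero hpq.symm
    rfl
  | cons hg p ih =>
    cases q with
    | nil => simp at hpq
    | cons hh q =>
      exact Adj.reachable (G := G.tensorProd H) ⟨hg, hh⟩ |>.trans (ih q (by simpa using hpq))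

theorem connected_tensorProd (hG : G.Connected) (hH : H.Connected) (hGb : ¬ G.Colorable 2)
    (hHb : ¬ H.Colorable 2) : (G.tensorProd H).Connected := by
  have := hG.nonempty
  have := hH.nonempty
  refine ⟨fun x y => ?_⟩
  obtain ⟨M, hM⟩ := exists_walk_length_eq_of_not_colorable_two hG.preconnected hGb x.1 y.1
  obtain ⟨N, hN⟩ := exists_walk_length_eq_of_not_colorable_two hH.preconnected hHb x.2 y.2
  obtain ⟨p, hp⟩ := hM (max M N) (le_max_left M N)
  obtain ⟨q, hq⟩ := hN (max M N) (le_max_right M N)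
  exact reachable_tensorProd_of_length_eq p q (hp.trans hq.symm)

variable (G H) in
def tensorProdDartEquiv : (G.tensorProd H).Dart ≃ G.Dart × H.Dart where
  toFun d := (⟨(d.fst.1, d.snd.1), d.adj.1⟩, ⟨(d.fst.2, d.snd.2), d.adj.2⟩)
  invFun d := ⟨((d.1.fst, d.2.fst), (d.1.snd, d.2.snd)), d.1.adj, d.2.adj⟩
  left_inv _ := rfl
  right_inv _ := rfl

theorem ncard_edgeSet_tensorProd [Finite α] [Finite β] :
    (G.tensorProd H).edgeSet.ncard = 2 * G.edgeSet.ncard * H.edgeSet.ncard := by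
  have h := Nat.card_congr (tensorProdDartEquiv G H)
  rw [Nat.card_prod, natCard_dart, natCard_dart, natCard_dart] at h
  linarith

end TensorProd

section MonochromaticConnection

variable {G : SimpleGraph V}

theorem IsMCColoring.ncard_image_le_mc [Finite V] {c : Sym2 V → ℕ} (hc : G.IsMCColoring c) :
    (c '' G.edgeSet).ncard ≤ G.mc :=
  le_csSup ⟨G.edgeSet.ncard, by rintro n ⟨c', -, rfl⟩; exact Set.ncard_image_le⟩
    ⟨c, hc, rfl⟩

variable (G) in
theorem mc_le_ncard_edgeSet [Finite V] : G.mc ≤ G.edgeSet.ncard :=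
  csSup_le' (by rintro n ⟨c, -, rfl⟩; exact Set.ncard_image_le)

theorem isMCColoring_of_connected_le {T : SimpleGraph V} (hTG : T ≤ G) (hT : T.Connected)
    {c : Sym2 V → ℕ} {k : ℕ} (hc : ∀ e ∈ T.edgeSet, c e = k) : G.IsMCColoring c := fun u v =>
  let p := (hT u v).some
  ⟨p.mapLe hTG, k, fun e he =>
    hc e (p.edges_subset_edgeSet (by rwa [Walk.edges_mapLe_eq_edges] at he))⟩

theorem Connected.ncard_edgeSet_add_two_le_mc_add_card [Finite V] [Nontrivial V]
    (hG : G.Connected) : G.edgeSet.ncard + 2 ≤ G.mc + Nat.card V := by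
  classical
  obtain ⟨T, hTG, hT⟩ := hG.exists_isTree_le
  have hTcard : T.edgeSet.ncard + 1 = Nat.card V := (isTree_iff_connected_and_card.1 hT).2
  have hTsub : T.edgeSet ⊆ G.edgeSet := edgeSet_mono hTG
  have hV : 1 < Nat.card V := Finite.one_lt_card
  obtain ⟨e₀, he₀⟩ : T.edgeSet.Nonempty := Set.nonempty_of_ncard_ne_zero (by omega)
  obtain ⟨ι, hι⟩ := Countable.exists_injective_nat (Sym2 V)
  let c : Sym2 V → ℕ := fun e => if e ∈ T.edgeSet then 0 else ι e + 1
  have hc : G.IsMCColoring c := isMCColoring_of_connected_le hTG hT.connected (k := 0)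
    (fun e he => if_pos he)
  have hinj : Set.InjOn c (G.edgeSet \ T.edgeSet) := fun e he f hf hef => by
    simp only [c, if_neg he.2, if_neg hf.2] at hef
    exact hι (by omega)
  have h0 : 0 ∉ c '' (G.edgeSet \ T.edgeSet) := by
    rintro ⟨e, he, hce⟩
    simp only [c, if_neg he.2] at hce
    omega
  have hsub : insert 0 (c '' (G.edgeSet \ T.edgeSet)) ⊆ c '' G.edgeSet := by
    rintro _ (rfl | ⟨e, he, rfl⟩)
    · exact ⟨e₀, hTsub he₀, if_pos he₀⟩
    · exact ⟨e, he.1, rfl⟩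
  have hcount := (Set.ncard_le_ncard hsub).trans hc.ncard_image_le_mc
  rw [Set.ncard_insert_of_notMem h0, hinj.ncard_image, Set.ncard_sdiff hTsub] at hcount
  have := Set.ncard_le_ncard hTsub
  omega

theorem card_le_ncard_edgeSet_of_not_colorable_two [Finite V] (hG : G.Connected)
    (h : ¬ G.Colorable 2) : Nat.card V ≤ G.edgeSet.ncard := by
  have hV := hG.card_vert_le_card_edgeSet_add_one
  rw [Nat.card_coe_set_eq] at hV
  by_contra! hlt
  refine h (isTree_iff_connected_and_card.2 ⟨hG, ?_⟩).colorable_two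
  rw [Nat.card_coe_set_eq]
  omega

end MonochromaticConnection

end SimpleGraph

/-- Theorem 2.4: for connected non-bipartite `G` and `H`,
`|E(G)||E(H)| + 2 ≤ mc(G × H) ≤ 2|E(G)||E(H)| + 1`. -/
theorem mc_tensorProd {α β : Type*} [Fintype α] [Fintype β]
    (G : SimpleGraph α) (H : SimpleGraph β)
    (hG : G.Connected) (hH : H.Connected)
    (hGb : ¬ G.Colorable 2) (hHb : ¬ H.Colorable 2) :
    G.edgeSet.ncard * H.edgeSet.ncard + 2 ≤ (G.tensorProd H).mc ∧
      (G.tensorProd H).mc ≤ 2 * G.edgeSet.ncard * H.edgeSet.ncard + 1 := by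
  obtain ⟨g⟩ := hG.nonempty
  obtain ⟨g', hg⟩ := exists_adj_of_not_colorable_two hG.preconnected hGb g
  have : Nontrivial α := ⟨g, g', hg.ne⟩
  have : Nonempty β := hH.nonempty
  have hE : (G.tensorProd H).edgeSet.ncard = 2 * G.edgeSet.ncard * H.edgeSet.ncard :=
    ncard_edgeSet_tensorProd
  have hV : Nat.card (α × β) ≤ G.edgeSet.ncard * H.edgeSet.ncard := by
    rw [Nat.card_prod]
    exact Nat.mul_le_mul (card_le_ncard_edgeSet_of_not_colorable_two hG hGb)
      (card_le_ncard_edgeSet_of_not_colorable_two hH hHb)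
  have hlow := (connected_tensorProd hG hH hGb hHb).ncard_edgeSet_add_two_le_mc_add_card
  have hup := mc_le_ncard_edgeSet (G.tensorProd H)
  constructor <;> linarith
end

section
/- For integers n ≥ 3 and m ≥ 2, the two-dimensional grid graph P_n □ P_m satisfies mc(P_n □ P_m) = nm − n − m + 2. -/
open SimpleGraph

/-!
Colouring a spanning tree with one colour and every other edge with a colour of its own shows
`mc G + |V| ≥ |E| + 2` for every connected graph `G` with an edge.

Conversely, let `r` be a vertex whose only neighbours `p`, `q` are non-adjacent (a corner of the
grid). A monochromatic walk leaving `r` starts with `rp` or `rq`, so the edges coloured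
`c(rp)` or `c(rq)` form a connected spanning subgraph `H`, and every other colour has at least
one edge; this gives `mc G + |V| ≤ |E| + 2` unless `c(rp) ≠ c(rq)`, `H` is a spanning tree and
all other colours are used once. In that case a monochromatic `p`–`q` walk can use neither a
colour of a single edge (`p`, `q` are not adjacent) nor a colour of `H` (the tree path `p r q`
in `H` has both colours).

For the grid, `|V| = nm` and `|E| = (n - 1)m + n(m - 1)`.
-/

namespace SimpleGraph

variable {V : Type*} {G : SimpleGraph V}

theorem Walk.adj_of_forall_edges_eq {u v : V} (w : G.Walk u v) (huv : u ≠ v)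
    (h : ∀ e ∈ w.edges, ∀ e' ∈ w.edges, e = e') : G.Adj u v := by
  have hnil : ¬w.Nil := w.not_nil_of_ne huv
  have hfirst := w.mk_start_snd_mem_edges hnil
  have hedge : s(u, w.snd) = s(u, v) := by
    refine (Sym2.mem_and_mem_iff huv).mp ⟨Sym2.mem_mk_left _ _, ?_⟩
    rw [h _ hfirst _ (w.mk_penultimate_end_mem_edges hnil)]
    exact Sym2.mem_mk_right _ _
  rw [← SimpleGraph.mem_edgeSet, ← hedge]
  exact w.edges_subset_edgeSet hfirst

theorem IsAcyclic.edges_subset_edges_of_isPath (hG : G.IsAcyclic) {u v : V} {p : G.Walk u v}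
    (hp : p.IsPath) (w : G.Walk u v) : p.edges ⊆ w.edges := by
  classical
  have : (⟨p, hp⟩ : G.Path u v) = w.toPath := (hG.subsingleton_path u v).elim _ _
  rw [show p = w.toPath from congrArg Subtype.val this]
  exact w.edges_toPath_subset_edges

def coloredIn (G : SimpleGraph V) (c : Sym2 V → ℕ) (K : Set ℕ) : SimpleGraph V :=
  G.deleteEdges {e | c e ∉ K}

variable {c : Sym2 V → ℕ} {K : Set ℕ}

theorem edgeSet_coloredIn : (G.coloredIn c K).edgeSet = G.edgeSet ∩ c ⁻¹' K := by
  ext e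
  simp [coloredIn, edgeSet_deleteEdges]

theorem coloredIn_adj {x y : V} : (G.coloredIn c K).Adj x y ↔ G.Adj x y ∧ c s(x, y) ∈ K := by
  simp [coloredIn]

def Walk.toColoredIn {u v : V} (w : G.Walk u v) (hw : ∀ e ∈ w.edges, c e ∈ K) :
    (G.coloredIn c K).Walk u v :=
  w.toDeleteEdges _ fun e he => not_not.mpr (hw e he)

theorem Walk.edges_toColoredIn {u v : V} (w : G.Walk u v) (hw : ∀ e ∈ w.edges, c e ∈ K) :
    (w.toColoredIn hw).edges = w.edges :=
  w.edges_transfer _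

theorem IsMCColoring.reachable_coloredIn (hc : G.IsMCColoring c) (r x : V) :
    (G.coloredIn c ((fun y => c s(r, y)) '' G.neighborSet r)).Reachable r x := by
  obtain rfl | hrx := eq_or_ne r x
  · rfl
  obtain ⟨w, k, hw⟩ := hc r x
  have hnil : ¬w.Nil := w.not_nil_of_ne hrx
  refine ⟨w.toColoredIn fun e he => ⟨w.snd, w.adj_snd hnil, ?_⟩⟩
  exact (hw _ (w.mk_start_snd_mem_edges hnil)).trans (hw e he).symm

theorem IsMCColoring.not_injOn_of_isTree (hc : G.IsMCColoring c) {r p q : V} (hp : G.Adj r p)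
    (hq : G.Adj r q) (hpq : ¬G.Adj p q) (hcol : c s(r, p) ≠ c s(r, q)) (hpK : c s(r, p) ∈ K)
    (hqK : c s(r, q) ∈ K) (hT : (G.coloredIn c K).IsTree) :
    ¬Set.InjOn c (G.edgeSet \ c ⁻¹' K) := by
  intro hinj
  have hne : p ≠ q := by rintro rfl; exact hcol rfl
  obtain ⟨w, k, hw⟩ := hc p q
  by_cases hk : k ∈ K
  · let P : (G.coloredIn c K).Walk p q :=
      .cons (coloredIn_adj.mpr ⟨hp.symm, Sym2.eq_swap ▸ hpK⟩)
        (.cons (coloredIn_adj.mpr ⟨hq, hqK⟩) .nil)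
    have hP : P.IsPath := by simp [P, hne, hq.ne, hp.ne.symm]
    have hsub := hT.isAcyclic.edges_subset_edges_of_isPath hP
      (w.toColoredIn fun e he => hw e he ▸ hk)
    rw [Walk.edges_toColoredIn] at hsub
    apply hcol
    rw [Sym2.eq_swap, hw _ (hsub (by simp [P])), hw _ (hsub (by simp [P]))]
  · refine hpq (w.adj_of_forall_edges_eq hne fun e he e' he' => hinj ?_ ?_ ?_)
    · exact ⟨w.edges_subset_edgeSet he, fun h => hk (hw e he ▸ h)⟩
    · exact ⟨w.edges_subset_edgeSet he', fun h => hk (hw e' he' ▸ h)⟩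
    · rw [hw e he, hw e' he']

theorem IsMCColoring.ncard_image_add_card_le [Finite V] (hc : G.IsMCColoring c) {r p q : V}
    (hr : G.neighborSet r = {p, q}) (hpq : ¬G.Adj p q) :
    (c '' G.edgeSet).ncard + Nat.card V ≤ G.edgeSet.ncard + 2 := by
  set K : Set ℕ := {c s(r, p), c s(r, q)}
  set H := G.coloredIn c K
  have hp : G.Adj r p := by simp [← mem_neighborSet, hr]
  have hq : G.Adj r q := by simp [← mem_neighborSet, hr]
  have hH : H.Connected := by
    refine (connected_iff_exists_forall_reachable H).mpr ⟨r, fun x => ?_⟩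
    simpa [hr, Set.image_pair] using hc.reachable_coloredIn r x
  have hvert : Nat.card V ≤ (G.edgeSet ∩ c ⁻¹' K).ncard + 1 := by
    simpa [H, edgeSet_coloredIn, Nat.card_coe_set_eq] using hH.card_vert_le_card_edgeSet_add_one
  have hedges := Set.ncard_inter_add_ncard_sdiff_eq_ncard G.edgeSet (c ⁻¹' K)
  have hcolors : (c '' G.edgeSet).ncard ≤ K.ncard + (c '' (G.edgeSet \ c ⁻¹' K)).ncard := by
    refine (Set.ncard_le_ncard ?_ ((Set.toFinite K).union (Set.toFinite _))).trans
      (Set.ncard_union_le _ _)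
    rintro _ ⟨e, he, rfl⟩
    by_cases hK : c e ∈ K
    · exact Or.inl hK
    · exact Or.inr ⟨e, ⟨he, hK⟩, rfl⟩
  have hrest := Set.ncard_image_le (f := c) (Set.toFinite (G.edgeSet \ c ⁻¹' K))
  by_cases hcol : c s(r, p) = c s(r, q)
  · have hK : K.ncard = 1 := by simp [K, hcol]
    omega
  have hK : K.ncard = 2 := Set.ncard_pair hcol
  by_cases hvert' : Nat.card V ≤ (G.edgeSet ∩ c ⁻¹' K).ncard
  · omega
  have hT : H.IsTree := by
    rw [isTree_iff_connected_and_card]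
    simp only [H, edgeSet_coloredIn, Nat.card_coe_set_eq]
    exact ⟨hH, by omega⟩
  have hrest' : (c '' (G.edgeSet \ c ⁻¹' K)).ncard ≠ (G.edgeSet \ c ⁻¹' K).ncard :=
    (Set.ncard_image_iff (Set.toFinite _)).not.mpr
      (hc.not_injOn_of_isTree hp hq hpq hcol (by simp [K]) (by simp [K]) hT)
  omega

theorem Connected.exists_isMCColoring_ncard_image_add_card_eq [Finite V] [Nontrivial V]
    (hG : G.Connected) :
    ∃ c : Sym2 V → ℕ, G.IsMCColoring c ∧
      (c '' G.edgeSet).ncard + Nat.card V = G.edgeSet.ncard + 2 := by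
  classical
  obtain ⟨T, hTG, hT⟩ := hG.exists_isTree_le
  obtain ⟨f, hf⟩ := Countable.exists_injective_nat (Sym2 V)
  let c : Sym2 V → ℕ := fun e => if e ∈ T.edgeSet then 0 else f e + 1
  have hTcard : T.edgeSet.ncard + 1 = Nat.card V := by
    simpa using (isTree_iff_connected_and_card.mp hT).2
  have hTne : T.edgeSet.Nonempty := by
    refine Set.nonempty_of_ncard_ne_zero fun h => ?_
    have := Finite.one_lt_card (α := V)
    omega
  have hTsub : T.edgeSet ⊆ G.edgeSet := edgeSet_mono hTG
  refine ⟨c, fun u v => ?_, ?_⟩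
  · obtain ⟨w⟩ := hT.connected.preconnected u v
    refine ⟨w.mapLe hTG, 0, fun e he => ?_⟩
    rw [Walk.edges_mapLe_eq_edges] at he
    simp [c, w.edges_subset_edgeSet he]
  have hT0 : c '' T.edgeSet = {0} := by
    rw [Set.image_congr fun e he => if_pos he]
    exact hTne.image_const 0
  have hrest : c '' (G.edgeSet \ T.edgeSet) = (fun e => f e + 1) '' (G.edgeSet \ T.edgeSet) :=
    Set.image_congr fun e he => if_neg he.2
  have hsplit : c '' G.edgeSet = insert 0 (c '' (G.edgeSet \ T.edgeSet)) := by
    conv_lhs => rw [← Set.union_sdiff_cancel hTsub]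
    rw [Set.image_union, hT0, Set.singleton_union]
  rw [hsplit, Set.ncard_insert_of_notMem (by simp [hrest]), hrest,
    Set.ncard_image_of_injective _ (show Function.Injective fun e => f e + 1 from
      (add_left_injective 1).comp hf), ← hTcard, ← Set.ncard_sdiff_add_ncard_of_subset hTsub]
  ring

theorem mc_eq_of_isMCColoring (hc : G.IsMCColoring c)
    (hmax : ∀ c', G.IsMCColoring c' → (c' '' G.edgeSet).ncard ≤ (c '' G.edgeSet).ncard) :
    G.mc = (c '' G.edgeSet).ncard :=
  IsGreatest.csSup_eq ⟨⟨c, hc, rfl⟩, by rintro _ ⟨c', hc', rfl⟩; exact hmax c' hc'⟩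

theorem mc_add_card_eq [Finite V] (hG : G.Connected) {r p q : V} (hr : G.neighborSet r = {p, q})
    (hpq : ¬G.Adj p q) : G.mc + Nat.card V = G.edgeSet.ncard + 2 := by
  have : Nontrivial V := ⟨r, p, (show G.Adj r p by simp [← mem_neighborSet, hr]).ne⟩
  obtain ⟨c, hc, hcard⟩ := hG.exists_isMCColoring_ncard_image_add_card_eq
  rw [mc_eq_of_isMCColoring hc fun c' hc' => by
    have := hc'.ncard_image_add_card_le hr hpq
    omega]
  exact hcard

theorem ncard_edgeSet_pathGraph (n : ℕ) : (pathGraph n).edgeSet.ncard = n - 1 := by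
  cases n with
  | zero => simp [Set.eq_empty_of_isEmpty]
  | succ n =>
    have hrange : (pathGraph (n + 1)).edgeSet =
        Set.range fun i : Fin n => s(i.castSucc, i.succ) := by
      ext e
      induction e using Sym2.ind with
      | _ x y =>
        simp only [mem_edgeSet, pathGraph_adj, Set.mem_range, Sym2.eq_iff, Fin.ext_iff,
          Fin.val_castSucc, Fin.val_succ]
        constructor
        · rintro (h | h)
          · exact ⟨⟨x, by omega⟩, Or.inl ⟨rfl, h⟩⟩
          · exact ⟨⟨y, by omega⟩, Or.inr ⟨rfl, h⟩⟩
        · rintro ⟨i, ⟨h1, h2⟩ | ⟨h1, h2⟩⟩ <;> omega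
    rw [hrange, Set.ncard_range_of_injective]
    · simp
    · intro i j hij
      simp only [Sym2.eq_iff, Fin.ext_iff, Fin.val_castSucc, Fin.val_succ] at hij
      exact Fin.ext (by omega)

theorem ncard_edgeSet_boxProd {α β : Type*} [Fintype α] [Fintype β] (G : SimpleGraph α)
    (H : SimpleGraph β) :
    (G □ H).edgeSet.ncard = G.edgeSet.ncard * Nat.card β + Nat.card α * H.edgeSet.ncard := by
  classical
  simp only [← coe_edgeFinset, Set.ncard_coe_finset, Nat.card_eq_fintype_card]
  have hdeg := (G □ H).sum_degrees_eq_twice_card_edges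
  simp only [degree_boxProd] at hdeg
  rw [Finset.sum_add_distrib, Fintype.sum_prod_type, Fintype.sum_prod_type_right] at hdeg
  -- the degrees still carry `Fintype` instances at `(a, b).1`, which block `Finset.sum_const`
  change ∑ a, ∑ _b : β, G.degree a + ∑ b, ∑ _a : α, H.degree b = _ at hdeg
  simp only [Finset.sum_const, Finset.card_univ, smul_eq_mul, ← Finset.mul_sum,
    sum_degrees_eq_twice_card_edges] at hdeg
  linarith

theorem neighborSet_boxProd_pathGraph_zero (a b : ℕ) :
    (pathGraph (a + 2) □ pathGraph (b + 2)).neighborSet (0, 0) = {(1, 0), (0, 1)} := by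
  ext ⟨x, y⟩
  simp only [mem_neighborSet, boxProd_adj, pathGraph_adj, Set.mem_insert_iff,
    Set.mem_singleton_iff, Prod.mk.injEq, Fin.ext_iff, Fin.val_zero, Fin.val_one]
  omega

theorem not_adj_boxProd_pathGraph_one_zero_zero_one (a b : ℕ) :
    ¬(pathGraph (a + 2) □ pathGraph (b + 2)).Adj (1, 0) (0, 1) := by
  simp [boxProd_adj]

end SimpleGraph

/-- Proposition 3.1(i): for `n ≥ 3`, `m ≥ 2`, `mc(P_n □ P_m) = nm - n - m + 2`. -/
theorem mc_grid (n m : ℕ) (hn : 3 ≤ n) (hm : 2 ≤ m) :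
    ((pathGraph n).boxProd (pathGraph m)).mc = n * m - n - m + 2 := by
  obtain ⟨a, rfl⟩ : ∃ a, n = a + 2 := ⟨n - 2, by omega⟩
  obtain ⟨b, rfl⟩ : ∃ b, m = b + 2 := ⟨m - 2, by omega⟩
  have h : (pathGraph (a + 2) □ pathGraph (b + 2)).mc + Nat.card (Fin (a + 2) × Fin (b + 2)) =
      (pathGraph (a + 2) □ pathGraph (b + 2)).edgeSet.ncard + 2 :=
    mc_add_card_eq ((pathGraph_connected _).boxProd (pathGraph_connected _))
      (neighborSet_boxProd_pathGraph_zero a b) (not_adj_boxProd_pathGraph_one_zero_zero_one a b)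
  simp only [ncard_edgeSet_boxProd, ncard_edgeSet_pathGraph, Nat.card_eq_fintype_card,
    Fintype.card_prod, Fintype.card_fin, Nat.reduceSubDiff] at h
  have hsize : (a + 2) * (b + 2) = a * b + 2 * a + 2 * b + 4 := by ring
  have hedges : (a + 1) * (b + 2) + (a + 2) * (b + 1) = 2 * (a * b) + 3 * a + 3 * b + 4 := by ring
  omega
end
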